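/- arXiv:math/0601425 — 3 statements merged into one kernel-verified Lean document; each statement's English description precedes it below -/
import Mathlib

section
/- The 2-cocycle τ on gl_3(C_q) defined by τ(E_{ij}(s^{m1}t^{n1}), E_{kl}(s^{m2}t^{n2})) = (m1, n1) q^{n1 m2} δ_{jk} δ_{il} δ_{m1+m2,0} δ_{n1+n2,0} (valued in C^2) satisfies the cocycle conditions: τ(x,y) = −τ(y,x) and τ([x,y],z) + τ([y,z],x) + τ([z,x],y) = 0 for all x, y, z in gl_3(C_q). -/
noncomputable section

/-- `gl₃(ℂ_q)` given by its basis `E_{ij}(s^m t^n)`. -/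
abbrev L3 : Type := (Fin 3 × Fin 3) × ℤ × ℤ →₀ ℂ

/-- The Lie bracket of `gl₃(ℂ_q)` on basis elements:
`[E_{ij}(s^{m1}t^{n1}), E_{kl}(s^{m2}t^{n2})] = δ_{jk} q^{n1 m2} E_{il}(s^{m1+m2}t^{n1+n2})
 − δ_{il} q^{n2 m1} E_{kj}(s^{m1+m2}t^{n1+n2})`. -/
def bb0 (q : ℂ) (x y : (Fin 3 × Fin 3) × ℤ × ℤ) : L3 :=
  (if x.1.2 = y.1.1 then
      Finsupp.single ((x.1.1, y.1.2), (x.2.1 + y.2.1, x.2.2 + y.2.2)) (q ^ (x.2.2 * y.2.1))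
    else 0)
  - (if x.1.1 = y.1.2 then
      Finsupp.single ((y.1.1, x.1.2), (x.2.1 + y.2.1, x.2.2 + y.2.2)) (q ^ (y.2.2 * x.2.1))
    else 0)

/-- The bracket on `gl₃(ℂ_q)`, extended bilinearly. -/
def brL (q : ℂ) (x y : L3) : L3 :=
  x.sum fun p α => y.sum fun r β => (α * β) • bb0 q p r

/-- The `ℂ²`-valued 2-cocycle on basis elements:
`τ(E_{ij}(s^{m1}t^{n1}), E_{kl}(s^{m2}t^{n2})) = (m1, n1) q^{n1 m2} δ_{jk} δ_{il} δ_{m1+m2,0} δ_{n1+n2,0}`. -/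
def tauB (q : ℂ) (x y : (Fin 3 × Fin 3) × ℤ × ℤ) : ℂ × ℂ :=
  if x.1.2 = y.1.1 ∧ x.1.1 = y.1.2 ∧ x.2.1 + y.2.1 = 0 ∧ x.2.2 + y.2.2 = 0 then
    ((x.2.1 : ℂ) * q ^ (x.2.2 * y.2.1), (x.2.2 : ℂ) * q ^ (x.2.2 * y.2.1))
  else 0

/-- `τ`, extended bilinearly. -/
def tau (q : ℂ) (x y : L3) : ℂ × ℂ :=
  x.sum fun p α => y.sum fun r β => (α * β) • tauB q p r


/-!
Both `τ` and the bracket are bilinear extensions of their values on the basis `E_{ij}(s^m t^n)`,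
so both identities reduce to basis elements. There `τ([E_p, E_r], E_s)` vanishes unless the
degrees of `p, r, s` sum to zero, and is then `c(p, r, s) • (-deg s)` for a scalar `c` that is
invariant under cyclic permutation: once the degrees sum to zero, the exponents of `q` in the
three rotated terms coincide. The cyclic sum is therefore `-c • (deg p + deg r + deg s) = 0`.
-/

namespace Finsupp

variable (R : Type*) {α β M : Type*} [CommSemiring R] [AddCommMonoid M] [Module R M]

def linearCombination₂ (g : α → β → M) :
    (α →₀ R) →ₗ[R] (β →₀ R) →ₗ[R] M :=
  linearCombination R fun a => linearCombination R (g a)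

variable {R}

theorem linearCombination₂_apply (g : α → β → M) (x : α →₀ R) (y : β →₀ R) :
    linearCombination₂ R g x y = x.sum fun a c => y.sum fun b d => (c * d) • g a b := by
  simp only [linearCombination₂, linearCombination_apply, LinearMap.finsupp_sum_apply,
    LinearMap.smul_apply, smul_sum, smul_smul]

@[simp]
theorem linearCombination₂_single (g : α → β → M) (a : α) (b : β) (c d : R) :
    linearCombination₂ R g (single a c) (single b d) = (c * d) • g a b := by
  simp [linearCombination₂, smul_smul]

end Finsupp

namespace LinearMap

variable {R M N : Type*} [CommSemiring R] [AddCommMonoid M] [Module R M]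
  [AddCommMonoid N] [Module R N]

def rotate₃ (T : M →ₗ[R] M →ₗ[R] M →ₗ[R] N) : M →ₗ[R] M →ₗ[R] M →ₗ[R] N :=
  (lflip.toLinearMap ∘ₗ T).flip

@[simp]
theorem rotate₃_apply (T : M →ₗ[R] M →ₗ[R] M →ₗ[R] N) (x y z : M) :
    rotate₃ T x y z = T y z x := rfl

theorem cyclic_sum_eq_zero_of_basis {ι : Type*} (b : Module.Basis ι R M)
    (T : M →ₗ[R] M →ₗ[R] M →ₗ[R] N)
    (h : ∀ i j k, T (b i) (b j) (b k) + T (b j) (b k) (b i) + T (b k) (b i) (b j) = 0)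
    (x y z : M) : T x y z + T y z x + T z x y = 0 := by
  have hS : T + rotate₃ T + rotate₃ (rotate₃ T) = 0 :=
    ext_basis b b fun i j => b.ext fun k => by simpa [add_assoc] using h i j k
  simpa [add_assoc] using congr($hS x y z)

end LinearMap

open Finsupp

def castDeg : ℤ × ℤ →+ ℂ × ℂ := (Int.castAddHom ℂ).prodMap (Int.castAddHom ℂ)

theorem tauB_eq (q : ℂ) (x y : (Fin 3 × Fin 3) × ℤ × ℤ) :
    tauB q x y = if x.1.2 = y.1.1 ∧ x.1.1 = y.1.2 ∧ x.2 + y.2 = 0 then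
      q ^ (x.2.2 * y.2.1) • castDeg x.2 else 0 := by
  have hd : x.2 + y.2 = 0 ↔ x.2.1 + y.2.1 = 0 ∧ x.2.2 + y.2.2 = 0 := Prod.ext_iff
  simp only [tauB, hd]
  split_ifs
  · ext <;> simp [castDeg, mul_comm]
  · rfl

theorem tauB_swap (q : ℂ) (x y : (Fin 3 × Fin 3) × ℤ × ℤ) : tauB q y x = -tauB q x y := by
  simp only [tauB_eq]
  by_cases h : x.1.2 = y.1.1 ∧ x.1.1 = y.1.2 ∧ x.2 + y.2 = 0
  · obtain ⟨hj, hi, hd⟩ := h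
    rw [if_pos ⟨hi.symm, hj.symm, by rwa [add_comm]⟩, if_pos ⟨hj, hi, hd⟩,
      eq_neg_of_add_eq_zero_right hd]
    simp only [map_neg, smul_neg, Prod.fst_neg, Prod.snd_neg, mul_neg, neg_mul]
  · rw [if_neg h, if_neg fun h' => h ⟨h'.2.1.symm, h'.1.symm, by rw [add_comm, h'.2.2]⟩, neg_zero]

theorem tau_eq_linearCombination₂ (q : ℂ) (x y : L3) :
    tau q x y = linearCombination₂ ℂ (tauB q) x y :=
  (linearCombination₂_apply _ x y).symm

theorem brL_eq_linearCombination₂ (q : ℂ) (x y : L3) :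
    brL q x y = linearCombination₂ ℂ (bb0 q) x y :=
  (linearCombination₂_apply _ x y).symm

def cyclicCoeff (q : ℂ) (p r s : (Fin 3 × Fin 3) × ℤ × ℤ) : ℂ :=
  (if p.1.2 = r.1.1 ∧ r.1.2 = s.1.1 ∧ s.1.2 = p.1.1 then q ^ (p.2.2 * r.2.1 - s.2.2 * s.2.1)
    else 0)
  - (if p.1.1 = r.1.2 ∧ r.1.1 = s.1.2 ∧ s.1.1 = p.1.2 then q ^ (r.2.2 * p.2.1 - s.2.2 * s.2.1)
    else 0)

theorem cyclicCoeff_rotate (q : ℂ) {p r s : (Fin 3 × Fin 3) × ℤ × ℤ} (h : p.2 + r.2 + s.2 = 0) :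
    cyclicCoeff q r s p = cyclicCoeff q p r s := by
  obtain ⟨hm, hn⟩ := Prod.ext_iff.mp h
  simp only [Prod.fst_add, Prod.snd_add, Prod.fst_zero, Prod.snd_zero] at hm hn
  have e₁ : r.2.2 * s.2.1 - p.2.2 * p.2.1 = p.2.2 * r.2.1 - s.2.2 * s.2.1 := by
    linear_combination s.2.1 * hn - p.2.2 * hm
  have e₂ : s.2.2 * r.2.1 - p.2.2 * p.2.1 = r.2.2 * p.2.1 - s.2.2 * s.2.1 := by
    linear_combination s.2.2 * hm - p.2.1 * hn
  simp only [cyclicCoeff, e₁, e₂, and_rotate (a := p.1.2 = r.1.1), and_rotate (a := p.1.1 = r.1.2)]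

theorem linearCombination₂_tauB_bb0 (q : ℂ) (hq : q ≠ 0) (p r s : (Fin 3 × Fin 3) × ℤ × ℤ) :
    linearCombination₂ ℂ (tauB q) (bb0 q p r) (single s 1) =
      if p.2 + r.2 + s.2 = 0 then cyclicCoeff q p r s • -castDeg s.2 else 0 := by
  have hdeg : ((p.2.1 + r.2.1, p.2.2 + r.2.2) : ℤ × ℤ) = p.2 + r.2 := rfl
  rw [bb0, hdeg, map_sub, LinearMap.sub_apply]
  simp only [apply_ite (linearCombination₂ ℂ (tauB q)),
    apply_ite (fun f : L3 →ₗ[ℂ] ℂ × ℂ => f (single s 1)), map_zero, LinearMap.zero_apply,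
    linearCombination₂_single, mul_one, tauB_eq]
  by_cases hd : p.2 + r.2 + s.2 = 0
  · simp only [hd, and_true, if_true]
    rw [eq_neg_of_add_eq_zero_left hd]
    simp only [cyclicCoeff, sub_smul, ite_smul, zero_smul, smul_ite, smul_zero, smul_smul,
      ← zpow_add₀ hq, Prod.snd_neg, neg_mul, ← sub_eq_add_neg]
    simp only [← ite_and, map_neg, eq_comm (a := s.1.2), eq_comm (a := s.1.1),
      and_comm (a := p.1.2 = s.1.1)]
  · simp [hd]

theorem linearCombination₂_tauB_bb0_cyclic_sum (q : ℂ) (hq : q ≠ 0)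
    (p r s : (Fin 3 × Fin 3) × ℤ × ℤ) :
    linearCombination₂ ℂ (tauB q) (bb0 q p r) (single s 1)
      + linearCombination₂ ℂ (tauB q) (bb0 q r s) (single p 1)
      + linearCombination₂ ℂ (tauB q) (bb0 q s p) (single r 1) = 0 := by
  have hrot : r.2 + s.2 + p.2 = p.2 + r.2 + s.2 := by abel
  have hrot' : s.2 + p.2 + r.2 = p.2 + r.2 + s.2 := by abel
  simp only [linearCombination₂_tauB_bb0 q hq, hrot, hrot']
  by_cases hd : p.2 + r.2 + s.2 = 0
  · simp only [if_pos hd]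
    rw [cyclicCoeff_rotate q (hrot.trans hd), cyclicCoeff_rotate q hd, ← smul_add,
      ← smul_add, ← neg_add, ← neg_add, ← map_add, ← map_add, hrot', hd,
      map_zero, neg_zero, smul_zero]
  · simp only [if_neg hd, add_zero]

/-- `τ` is a 2-cocycle: it is antisymmetric and satisfies
`τ([x,y],z) + τ([y,z],x) + τ([z,x],y) = 0`. -/
theorem tau_is_two_cocycle (q : ℂ) (hq : q ≠ 0) :
    (∀ x y : L3, tau q x y = -(tau q y x))
    ∧ (∀ x y z : L3,
        tau q (brL q x y) z + tau q (brL q y z) x + tau q (brL q z x) y = 0) := by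
  refine ⟨fun x y => ?_, fun x y z => ?_⟩
  · have hflip : (linearCombination₂ ℂ (tauB q)).flip = -linearCombination₂ ℂ (tauB q) :=
      LinearMap.ext_basis Finsupp.basisSingleOne Finsupp.basisSingleOne fun p r => by
        simp [tauB_swap q p r]
    simpa [tau_eq_linearCombination₂] using congr($hflip y x)
  · simp only [brL_eq_linearCombination₂, tau_eq_linearCombination₂]
    exact LinearMap.cyclic_sum_eq_zero_of_basis Finsupp.basisSingleOne
      ((linearCombination₂ ℂ (bb0 q)).compr₂ (linearCombination₂ ℂ (tauB q)))
      (fun p r s => by simpa using linearCombination₂_tauB_bb0_cyclic_sum q hq p r s) x y z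
end
end

section
/- The set B = {E_{12}(α_1)···E_{12}(α_k) E_{32}(β_1)···E_{32}(β_l).1 : k, l ≥ 0, α_i, β_j monomials s^m t^n in C_q} spans the polynomial ring V; more precisely, each monomial ∏ x_{(3m+1,3n+1)}^{a_{(m,n)}} ∏ x_{(3m'−1,3n'−1)}^{b_{(m',n')}} is a linear combination of such vectors with k ≤ Σ a_{(m,n)} and l ≤ Σ b_{(m',n')}. -/
noncomputable section

open MvPolynomial

/-- The index set `K₁ ∪ K₋₁`, where `K₁ = {(3m+1,3n+1)}` and `K₋₁ = {(3m−1,3n−1)}`. -/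
abbrev K : Type :=
  {p : ℤ × ℤ // (∃ m n : ℤ, p = (3*m+1, 3*n+1)) ∨ (∃ m n : ℤ, p = (3*m-1, 3*n-1))}

/-- The polynomial ring `V = ℂ[x_A, x_B : A ∈ K₁, B ∈ K₋₁]`. -/
abbrev V : Type := MvPolynomial K ℂ

/-- The element `(3m+1, 3n+1)` of `K₁ ⊆ K`. -/
def k1 (m n : ℤ) : K := ⟨(3*m+1, 3*n+1), Or.inl ⟨m, n, rfl⟩⟩

/-- The element `(3m−1, 3n−1)` of `K₋₁ ⊆ K`. -/
def km1 (m n : ℤ) : K := ⟨(3*m-1, 3*n-1), Or.inr ⟨m, n, rfl⟩⟩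

/-- `P_{(m,n)} = a_{(m,n)} ∂/∂x_{(m,n)}`. -/
def Pop (a : K → ℂ) (i : K) (p : V) : V := a i • pderiv i p

/-- `Q_{(m,n)} = c_{(m,n)} ∂/∂x_{(m,n)} + d_{(m,n)} x_{(m,n)}`. -/
def Qop (c d : K → ℂ) (i : K) (p : V) : V := c i • pderiv i p + d i • (X i * p)

/-- The operator `e₁₂^{(μ)}(m,n) = Q_{(3m+1,3n+1)}`, formula (1.5). -/
def e12 (c d : K → ℂ) (m n : ℤ) (p : V) : V := Qop c d (k1 m n) p

/-- The operator `e₃₂^{(μ)}(m,n) = Q_{(3m−1,3n−1)}`, formula (1.9). -/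
def e32 (c d : K → ℂ) (m n : ℤ) (p : V) : V := Qop c d (km1 m n) p

/-- The operator `e₁₁^{(μ)}(m₁,n₁)`, formula (1.6). -/
def e11 (a c d : K → ℂ) (q μ : ℂ) (m1 n1 : ℤ) (p : V) : V :=
  (∑ᶠ (m : ℤ) (n : ℤ), q ^ (m * n1) • Qop c d (k1 (m1+m) (n1+n)) (Pop a (k1 m n) p))
  + (if (m1, n1) = ((0 : ℤ), (0 : ℤ)) then (μ/2) • p else 0)

/-- The operator `e₂₂^{(μ)}(m₁,n₁)`, formula (1.7). -/
def e22 (a c d : K → ℂ) (q μ : ℂ) (m1 n1 : ℤ) (p : V) : V :=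
  -(∑ᶠ (m : ℤ) (n : ℤ), q ^ (n * m1) • Qop c d (k1 (m1+m) (n1+n)) (Pop a (k1 m n) p))
  - (∑ᶠ (m : ℤ) (n : ℤ), q ^ (n * m1) • Qop c d (km1 (m1+m) (n1+n)) (Pop a (km1 m n) p))
  - (if (m1, n1) = ((0 : ℤ), (0 : ℤ)) then (μ/2) • p else 0)

/-- The operator `e₃₃^{(μ)}(m₁,n₁)`, formula (1.12). -/
def e33 (a c d : K → ℂ) (q μ : ℂ) (m1 n1 : ℤ) (p : V) : V :=
  (∑ᶠ (m : ℤ) (n : ℤ), q ^ (m * n1) • Qop c d (km1 (m1+m) (n1+n)) (Pop a (km1 m n) p))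
  + (if (m1, n1) = ((0 : ℤ), (0 : ℤ)) then (μ/2) • p else 0)

/-- The operator `e₁₃^{(μ)}(m₁,n₁)`, formula (1.11). -/
def e13 (a c d : K → ℂ) (q : ℂ) (m1 n1 : ℤ) (p : V) : V :=
  ∑ᶠ (m : ℤ) (n : ℤ), q ^ (m * n1) • Qop c d (k1 (m1+m) (n1+n)) (Pop a (km1 m n) p)

/-- The operator `e₃₁^{(μ)}(m₁,n₁)`, formula (1.10). -/
def e31 (a c d : K → ℂ) (q : ℂ) (m1 n1 : ℤ) (p : V) : V :=
  ∑ᶠ (m : ℤ) (n : ℤ), q ^ (m * n1) • Qop c d (km1 (m1+m) (n1+n)) (Pop a (k1 m n) p)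

/-- The operator `e₂₁^{(μ)}(m₁,n₁)`, formula (1.4). -/
def e21 (a c d : K → ℂ) (q μ : ℂ) (m1 n1 : ℤ) (p : V) : V :=
  (-(q ^ (-(m1 * n1)) * μ)) • Pop a (k1 (-m1) (-n1)) p
  - (∑ᶠ (m : ℤ) (n : ℤ) (m' : ℤ) (n' : ℤ),
      q ^ (n1 * m' + n * m1 + n * m') •
        Qop c d (km1 (m + m' + m1) (n + n' + n1)) (Pop a (k1 m n) (Pop a (k1 m' n') p)))
  - (∑ᶠ (m : ℤ) (n : ℤ) (u : ℤ) (v : ℤ),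
      q ^ (n1 * m + v * m1 + v * m) •
        Qop c d (km1 (m + u + m1) (n + v + n1)) (Pop a (k1 m n) (Pop a (km1 u v) p)))

/-- The operator `e₂₃^{(μ)}(m₁,n₁)`, formula (1.8). -/
def e23 (a c d : K → ℂ) (q μ : ℂ) (m1 n1 : ℤ) (p : V) : V :=
  (-(q ^ (-(m1 * n1)) * μ)) • Pop a (km1 (-m1) (-n1)) p
  - (∑ᶠ (m : ℤ) (n : ℤ) (u : ℤ) (v : ℤ),
      q ^ (n1 * u + n * m1 + n * u) •
        Qop c d (k1 (m + u + m1) (n + v + n1)) (Pop a (k1 m n) (Pop a (km1 u v) p)))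
  - (∑ᶠ (u : ℤ) (v : ℤ) (u' : ℤ) (v' : ℤ),
      q ^ (n1 * u' + v * m1 + v * u') •
        Qop c d (km1 (u + u' + m1) (v + v' + n1)) (Pop a (km1 u v) (Pop a (km1 u' v') p)))

/-- The operator `D₁^{(μ)}`, formula (1.13). -/
def D1 (a c d : K → ℂ) (p : V) : V :=
  (∑ᶠ (m : ℤ) (n : ℤ), m • Qop c d (k1 m n) (Pop a (k1 m n) p))
  + (∑ᶠ (m : ℤ) (n : ℤ), m • Qop c d (km1 m n) (Pop a (km1 m n) p))

/-- The operator `D₂^{(μ)}`, formula (1.14). -/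
def D2 (a c d : K → ℂ) (p : V) : V :=
  (∑ᶠ (m : ℤ) (n : ℤ), n • Qop c d (k1 m n) (Pop a (k1 m n) p))
  + (∑ᶠ (m : ℤ) (n : ℤ), n • Qop c d (km1 m n) (Pop a (km1 m n) p))

/-- A general element of `ℂ_q`, given by its coordinates in the monomial basis. -/
abbrev Cq : Type := (ℤ × ℤ) →₀ ℂ

/-- Extension of a family of monomial operators to all of `ℂ_q` by linearity. -/
def genAct (f : ℤ → ℤ → V → V) (α : Cq) (p : V) : V :=
  α.sum fun mn lam => lam • f mn.1 mn.2 p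

/-- Iterated action `E₁₂(α₁)⋯E₁₂(α_k).v` for monomials `α_i = s^{m_i}t^{n_i}`. -/
def actE12 (c d : K → ℂ) (L : List (ℤ × ℤ)) (p : V) : V :=
  L.foldr (fun mn v => Qop c d (k1 mn.1 mn.2) v) p

/-- Iterated action `E₃₂(β₁)⋯E₃₂(β_l).v` for monomials `β_j = s^{u_j}t^{v_j}`. -/
def actE32 (c d : K → ℂ) (L : List (ℤ × ℤ)) (p : V) : V :=
  L.foldr (fun mn v => Qop c d (km1 mn.1 mn.2) v) p

/-- The span of the vectors `E₁₂(α₁)⋯E₁₂(α_k)E₃₂(β₁)⋯E₃₂(β_l).1` of level `(k,l)`. -/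
def Lev (c d : K → ℂ) (k l : ℕ) : Submodule ℂ V :=
  Submodule.span ℂ
    {v | ∃ L1 L2 : List (ℤ × ℤ), L1.length = k ∧ L2.length = l ∧
        v = actE12 c d L1 (actE32 c d L2 1)}

/-- The action of `E_{ij}(s^m t^n)` (1-based indices `i+1, j+1`) in the module `(π, V)`
of Theorem 1.15. -/
def Eop (a c d : K → ℂ) (q μ : ℂ) (i j : Fin 3) (m n : ℤ) (p : V) : V :=
  match i.val, j.val with
  | 0, 0 => e11 a c d q μ m n p
  | 0, 1 => e12 c d m n p
  | 0, 2 => e13 a c d q m n p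
  | 1, 0 => e21 a c d q μ m n p
  | 1, 1 => e22 a c d q μ m n p
  | 1, 2 => e23 a c d q μ m n p
  | 2, 0 => e31 a c d q m n p
  | 2, 1 => e32 c d m n p
  | _, _ => e33 a c d q μ m n p

/-- The total degree of a monomial exponent `σ` in the variables from `K₁`
(characterized by first coordinate `≡ 1 mod 3`). -/
def deg1 (σ : K →₀ ℕ) : ℕ := σ.sum fun A e => if (A.val.1 % 3 = 1) then e else 0

/-- The total degree of a monomial exponent `σ` in the variables from `K₋₁`
(first coordinate `≡ 2 mod 3`). -/
def deg2 (σ : K →₀ ℕ) : ℕ := σ.sum fun A e => if (A.val.1 % 3 = 2) then e else 0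

namespace BasisSpanAux

open MvPolynomial Finsupp

variable (c d : K → ℂ)

/-- `Qop` as a linear map. -/
def Ql (i : K) : V →ₗ[ℂ] V where
  toFun := Qop c d i
  map_add' p q := by
    simp only [Qop, map_add, mul_add, smul_add]
    abel
  map_smul' r p := by
    simp only [Qop, Derivation.map_smul, RingHom.id_apply, mul_smul_comm, smul_add]
    module

lemma Ql_apply (i : K) (p : V) : Ql c d i p = Qop c d i p := rfl

lemma Qop_add (i : K) (p q : V) : Qop c d i (p + q) = Qop c d i p + Qop c d i q :=
  (Ql c d i).map_add p q

lemma Qop_smul (i : K) (r : ℂ) (p : V) : Qop c d i (r • p) = r • Qop c d i p :=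
  (Ql c d i).map_smul r p

lemma Qop_monomial (i : K) (s : K →₀ ℕ) (r : ℂ) :
    Qop c d i (monomial s r) =
      (c i * s i) • monomial (s - Finsupp.single i 1) r
        + d i • monomial (Finsupp.single i 1 + s) r := by
  rw [Qop, pderiv_monomial]
  congr 1
  · rw [smul_monomial, smul_monomial, smul_eq_mul, smul_eq_mul]
    ring_nf
  · congr 1
    rw [show (X i : V) = monomial (Finsupp.single i 1) 1 from rfl, monomial_mul, one_mul]

lemma sub_single_apply_ne {i j : K} (h : j ≠ i) (s : K →₀ ℕ) :
    (s - Finsupp.single j 1 : K →₀ ℕ) i = s i := by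
  rw [Finsupp.tsub_apply, Finsupp.single_apply, if_neg h, Nat.sub_zero]

lemma add_single_apply_ne {i j : K} (h : j ≠ i) (s : K →₀ ℕ) :
    (Finsupp.single j 1 + s : K →₀ ℕ) i = s i := by
  rw [Finsupp.add_apply, Finsupp.single_apply, if_neg h, zero_add]

lemma add_tsub_single {i j : K} (h : j ≠ i) (s : K →₀ ℕ) :
    Finsupp.single j 1 + s - Finsupp.single i 1
      = Finsupp.single j 1 + (s - Finsupp.single i 1) := by
  ext k
  simp only [Finsupp.tsub_apply, Finsupp.add_apply, Finsupp.single_apply]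
  by_cases h1 : j = k <;> by_cases h2 : i = k
  · exact absurd (h1.trans h2.symm) h
  · simp only [h1, h2, if_true, if_false]
    omega
  · simp only [h1, h2, if_true, if_false]
    omega
  · simp only [h1, h2, if_false]
    omega

lemma Qop_comm {i j : K} (h : i ≠ j) (p : V) :
    Qop c d i (Qop c d j p) = Qop c d j (Qop c d i p) := by
  have hji : j ≠ i := fun hh => h hh.symm
  have key : (Ql c d i) ∘ₗ (Ql c d j) = (Ql c d j) ∘ₗ (Ql c d i) := by
    apply MvPolynomial.linearMap_ext
    intro s
    apply LinearMap.ext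
    intro r
    simp only [LinearMap.comp_apply, Ql_apply]
    rw [Qop_monomial c d j, Qop_monomial c d i s r]
    simp only [Qop_add, Qop_smul, Qop_monomial]
    rw [sub_single_apply_ne hji, sub_single_apply_ne h,
      add_single_apply_ne hji, add_single_apply_ne h,
      add_tsub_single hji, add_tsub_single h,
      (tsub_right_comm : s - Finsupp.single j 1 - Finsupp.single i 1 = _),
      (show Finsupp.single i 1 + (Finsupp.single j 1 + s)
          = Finsupp.single j 1 + (Finsupp.single i 1 + s) by
        rw [← add_assoc, ← add_assoc, add_comm (Finsupp.single i 1)])]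
    module
  exact congrFun (congrArg (fun f => f.toFun) key) p

end BasisSpanAux

namespace BasisSpanAux

/-- Weighted degree of a monomial exponent. -/
def wdeg (w : K → ℕ) (σ : K →₀ ℕ) : ℕ := σ.sum fun A e => w A * e

lemma wdeg_mono {w : K → ℕ} {ρ τ : K →₀ ℕ} (h : ρ ≤ τ) : wdeg w ρ ≤ wdeg w τ := by
  have hsupp : ρ.support ⊆ τ.support := by
    intro k hk
    rw [Finsupp.mem_support_iff] at hk ⊢
    have := Finsupp.le_def.mp h k
    omega
  rw [wdeg, wdeg, Finsupp.sum, Finsupp.sum,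
    Finset.sum_subset hsupp (fun x _ hx => by
      rw [Finsupp.notMem_support_iff.mp hx, mul_zero])]
  exact Finset.sum_le_sum fun i _ => Nat.mul_le_mul_left _ (Finsupp.le_def.mp h i)

lemma wdeg_add (w : K → ℕ) (σ τ : K →₀ ℕ) : wdeg w (σ + τ) = wdeg w σ + wdeg w τ := by
  unfold wdeg
  exact Finsupp.sum_add_index' (fun a => by simp) (fun a b₁ b₂ => by rw [mul_add])

lemma wdeg_single (w : K → ℕ) (i : K) : wdeg w (Finsupp.single i 1) = w i := by
  unfold wdeg
  rw [Finsupp.sum_single_index] <;> simp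

/-- Weight for `deg1`. -/
def w1 : K → ℕ := fun A => if A.val.1 % 3 = 1 then 1 else 0

/-- Weight for `deg2`. -/
def w2 : K → ℕ := fun A => if A.val.1 % 3 = 2 then 1 else 0

lemma deg1_eq (σ : K →₀ ℕ) : deg1 σ = wdeg w1 σ := by
  unfold deg1 wdeg w1
  exact Finsupp.sum_congr fun A _ => by split_ifs <;> simp

lemma deg2_eq (σ : K →₀ ℕ) : deg2 σ = wdeg w2 σ := by
  unfold deg2 wdeg w2
  exact Finsupp.sum_congr fun A _ => by split_ifs <;> simp

lemma deg1_mono {ρ τ : K →₀ ℕ} (h : ρ ≤ τ) : deg1 ρ ≤ deg1 τ := by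
  rw [deg1_eq, deg1_eq]; exact wdeg_mono h

lemma deg2_mono {ρ τ : K →₀ ℕ} (h : ρ ≤ τ) : deg2 ρ ≤ deg2 τ := by
  rw [deg2_eq, deg2_eq]; exact wdeg_mono h

variable (c d : K → ℂ)

/-- Vectors of level at most `(k, l)`. -/
def SS (k l : ℕ) : Set V := {v : V | ∃ L1 L2 : List (ℤ × ℤ),
    L1.length ≤ k ∧ L2.length ≤ l ∧ v = actE12 c d L1 (actE32 c d L2 1)}

lemma one_mem_SS (k l : ℕ) : (1 : V) ∈ SS c d k l :=
  ⟨[], [], by simp, by simp, rfl⟩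

lemma SS_mono {k l k' l' : ℕ} (hk : k ≤ k') (hl : l ≤ l') : SS c d k l ⊆ SS c d k' l' := by
  rintro v ⟨L1, L2, h1, h2, hv⟩
  exact ⟨L1, L2, h1.trans hk, h2.trans hl, hv⟩

lemma k1_ne_km1 (m n u v : ℤ) : k1 m n ≠ km1 u v := by
  intro hh
  have : (3*m+1, 3*n+1) = (3*u-1, 3*v-1) := congrArg Subtype.val hh
  have h1 : 3*m+1 = 3*u-1 := congrArg Prod.fst this
  omega

lemma Qop_k1_mem_span {k l : ℕ} (m n : ℤ) {p : V}
    (hp : p ∈ Submodule.span ℂ (SS c d k l)) :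
    Qop c d (k1 m n) p ∈ Submodule.span ℂ (SS c d (k+1) l) := by
  have hle : Submodule.span ℂ (SS c d k l) ≤
      Submodule.comap (Ql c d (k1 m n)) (Submodule.span ℂ (SS c d (k+1) l)) := by
    rw [Submodule.span_le]
    rintro v ⟨L1, L2, h1, h2, rfl⟩
    exact Submodule.subset_span ⟨(m, n) :: L1, L2, Nat.succ_le_succ h1, h2, rfl⟩
  exact hle hp

lemma Qop_km1_actE12 (u v : ℤ) (L1 : List (ℤ × ℤ)) (w : V) :
    Qop c d (km1 u v) (actE12 c d L1 w) = actE12 c d L1 (Qop c d (km1 u v) w) := by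
  induction L1 with
  | nil => rfl
  | cons mn L ih =>
    show Qop c d (km1 u v) (Qop c d (k1 mn.1 mn.2) (actE12 c d L w)) = _
    rw [Qop_comm c d (fun hh => k1_ne_km1 mn.1 mn.2 u v hh.symm) (actE12 c d L w), ih]
    rfl

lemma Qop_km1_mem_span {k l : ℕ} (u v : ℤ) {p : V}
    (hp : p ∈ Submodule.span ℂ (SS c d k l)) :
    Qop c d (km1 u v) p ∈ Submodule.span ℂ (SS c d k (l+1)) := by
  have hle : Submodule.span ℂ (SS c d k l) ≤
      Submodule.comap (Ql c d (km1 u v)) (Submodule.span ℂ (SS c d k (l+1))) := by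
    rw [Submodule.span_le]
    rintro w ⟨L1, L2, h1, h2, rfl⟩
    refine Submodule.subset_span ⟨L1, (u, v) :: L2, h1, Nat.succ_le_succ h2, ?_⟩
    show Qop c d (km1 u v) (actE12 c d L1 (actE32 c d L2 1)) = _
    rw [Qop_km1_actE12]
    rfl
  exact hle hp

end BasisSpanAux

namespace BasisSpanAux

variable (c d : K → ℂ)

lemma monomial_mem (hd : ∀ i, d i ≠ 0) :
    ∀ N (σ : K →₀ ℕ), wdeg (fun _ => 1) σ ≤ N →
      (MvPolynomial.monomial σ (1 : ℂ)) ∈ Submodule.span ℂ (SS c d (deg1 σ) (deg2 σ)) := by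
  intro N
  induction N with
  | zero =>
    intro σ hσ
    have hσ0 : σ = 0 := by
      ext k
      by_contra hk
      have hmem : k ∈ σ.support := Finsupp.mem_support_iff.mpr (by simpa using hk)
      have h1 : 1 * σ k ≤ wdeg (fun _ => 1) σ :=
        Finset.single_le_sum (f := fun A => 1 * σ A) (fun i _ => Nat.zero_le _) hmem
      simp only [Finsupp.coe_zero, Pi.zero_apply] at hk
      omega
    subst hσ0
    rw [show (MvPolynomial.monomial (0 : K →₀ ℕ) (1:ℂ)) = (1 : V) by simp]
    exact Submodule.subset_span (one_mem_SS c d _ _)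
  | succ N ih =>
    intro σ hσ
    by_cases hσ0 : σ = 0
    · subst hσ0
      rw [show (MvPolynomial.monomial (0 : K →₀ ℕ) (1:ℂ)) = (1 : V) by simp]
      exact Submodule.subset_span (one_mem_SS c d _ _)
    · obtain ⟨i, hi⟩ : ∃ i, σ i ≠ 0 := by
        by_contra hc
        push_neg at hc
        exact hσ0 (Finsupp.ext fun k => hc k)
      set τ := σ - Finsupp.single i 1 with hτdef
      have hle : Finsupp.single i 1 ≤ σ := by
        rw [Finsupp.single_le_iff]
        omega
      have hστ : τ + Finsupp.single i 1 = σ := tsub_add_cancel_of_le hle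
      have hwt : wdeg (fun _ => 1) τ + 1 = wdeg (fun _ => 1) σ := by
        rw [← hστ, wdeg_add, wdeg_single]
      set ρ := τ - Finsupp.single i 1 with hρdef
      have hρτ : ρ ≤ τ := tsub_le_self
      have hτσ : τ ≤ σ := hτdef ▸ tsub_le_self
      have hA := ih τ (by omega)
      have hB := ih ρ (by have := wdeg_mono (w := fun _ => 1) hρτ; omega)
      have hQ : Qop c d i (MvPolynomial.monomial τ 1) =
          (c i * τ i) • MvPolynomial.monomial ρ 1 + d i • MvPolynomial.monomial σ 1 := by
        rw [Qop_monomial]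
        congr 2
        rw [add_comm, hστ]
      have key : MvPolynomial.monomial σ (1:ℂ) =
          (d i)⁻¹ • Qop c d i (MvPolynomial.monomial τ 1)
            - ((d i)⁻¹ * (c i * τ i)) • MvPolynomial.monomial ρ 1 := by
        rw [hQ, smul_add, smul_smul, smul_smul, inv_mul_cancel₀ (hd i), one_smul]
        abel
      have hmemρ : MvPolynomial.monomial ρ (1:ℂ) ∈
          Submodule.span ℂ (SS c d (deg1 σ) (deg2 σ)) :=
        Submodule.span_mono
          (SS_mono c d ((deg1_mono hρτ).trans (deg1_mono hτσ))
            ((deg2_mono hρτ).trans (deg2_mono hτσ))) hB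
      have hQmem : Qop c d i (MvPolynomial.monomial τ 1) ∈
          Submodule.span ℂ (SS c d (deg1 σ) (deg2 σ)) := by
        rcases i.2 with ⟨m, n, hmn⟩ | ⟨m, n, hmn⟩
        · have hi1 : i = k1 m n := Subtype.ext hmn
          have hw1 : w1 i = 1 := by
            unfold w1
            rw [if_pos (by rw [hmn]; omega)]
          have hw2 : w2 i = 0 := by
            unfold w2
            rw [if_neg (by rw [hmn]; omega)]
          have hd1 : deg1 σ = deg1 τ + 1 := by
            rw [deg1_eq, deg1_eq, ← hστ, wdeg_add, wdeg_single, hw1]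
          have hd2 : deg2 σ = deg2 τ := by
            rw [deg2_eq, deg2_eq, ← hστ, wdeg_add, wdeg_single, hw2, add_zero]
          rw [hi1, hd1, hd2]
          exact Qop_k1_mem_span c d m n hA
        · have hi1 : i = km1 m n := Subtype.ext hmn
          have hw1 : w1 i = 0 := by
            unfold w1
            rw [if_neg (by rw [hmn]; omega)]
          have hw2 : w2 i = 1 := by
            unfold w2
            rw [if_pos (by rw [hmn]; omega)]
          have hd1 : deg1 σ = deg1 τ := by
            rw [deg1_eq, deg1_eq, ← hστ, wdeg_add, wdeg_single, hw1, add_zero]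
          have hd2 : deg2 σ = deg2 τ + 1 := by
            rw [deg2_eq, deg2_eq, ← hστ, wdeg_add, wdeg_single, hw2]
          rw [hi1, hd1, hd2]
          exact Qop_km1_mem_span c d m n hA
      rw [key]
      exact Submodule.sub_mem _ (Submodule.smul_mem _ _ hQmem)
        (Submodule.smul_mem _ _ hmemρ)

end BasisSpanAux

/-- Lemma 2.5: the vectors `E₁₂(α₁)⋯E₁₂(α_k)E₃₂(β₁)⋯E₃₂(β_l).1`
(with `α_i, β_j` monomials of `ℂ_q`) span `V`; more precisely, every monomial
`∏ x_{(3m+1,3n+1)}^{a} ∏ x_{(3m'−1,3n'−1)}^{b}` lies in the span of such vectors with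
`k ≤ Σ a` and `l ≤ Σ b`. -/
theorem basis_span (a c d : K → ℂ) (had : ∀ i, a i * d i = 1) (hd : ∀ i, d i ≠ 0) :
    (Submodule.span ℂ
        {v : V | ∃ L1 L2 : List (ℤ × ℤ), v = actE12 c d L1 (actE32 c d L2 1)} = ⊤)
    ∧ ∀ σ : K →₀ ℕ, (MvPolynomial.monomial σ (1 : ℂ)) ∈
        Submodule.span ℂ
          {v : V | ∃ L1 L2 : List (ℤ × ℤ), L1.length ≤ deg1 σ ∧ L2.length ≤ deg2 σ ∧
              v = actE12 c d L1 (actE32 c d L2 1)} := by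
  have hmem : ∀ σ : K →₀ ℕ, (MvPolynomial.monomial σ (1 : ℂ)) ∈
      Submodule.span ℂ (BasisSpanAux.SS c d (deg1 σ) (deg2 σ)) :=
    fun σ => BasisSpanAux.monomial_mem c d hd _ σ le_rfl
  constructor
  · rw [Submodule.eq_top_iff']
    intro p
    rw [show p = ∑ v ∈ p.support, MvPolynomial.monomial v (MvPolynomial.coeff v p)
      from p.as_sum]
    refine Submodule.sum_mem _ fun v _ => ?_
    rw [show MvPolynomial.monomial v (MvPolynomial.coeff v p)
        = (MvPolynomial.coeff v p) • MvPolynomial.monomial v 1 by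
      rw [MvPolynomial.smul_monomial, smul_eq_mul, mul_one]]
    refine Submodule.smul_mem _ _ (Submodule.span_mono ?_ (hmem v))
    rintro w ⟨L1, L2, _, _, hw⟩
    exact ⟨L1, L2, hw⟩
  · intro σ
    exact hmem σ
end
end

section
/- In the module V, E_{21}(a) annihilates every vector of level (0, n): E_{21}(a).(E_{32}(β_1)···E_{32}(β_n).1) = 0 for all a, β_1, ..., β_n ∈ C_q and all n ≥ 0. -/
noncomputable section

open MvPolynomial

/-- Iterated action of `E₃₂` for a list of general elements of `ℂ_q`. -/
def actE32g (c d : K → ℂ) (L : List Cq) (p : V) : V :=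
  L.foldr (fun β v => genAct (fun m n => e32 c d m n) β v) p


lemma pderiv_comm' {σ : Type*} (i j : σ) (p : MvPolynomial σ ℂ) :
    pderiv i (pderiv j p) = pderiv j (pderiv i p) := by
  classical
  induction p using MvPolynomial.induction_on with
  | C a => simp
  | add p q hp hq => simp [map_add, hp, hq]
  | mul_X p k hp =>
    simp only [pderiv_mul, pderiv_X, map_add, hp, Pi.single_apply]
    split_ifs <;> simp [hp] <;> ring

/-- The invariant preserved by the `e₃₂` operators: all `K₁`-derivatives vanish. -/
def Ann (p : V) : Prop := ∀ m n : ℤ, pderiv (k1 m n) p = 0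

lemma k1_ne_km1 (m n u v : ℤ) : k1 m n ≠ km1 u v := by
  intro h
  have := congrArg (fun x : K => x.1.1) h
  simp only [k1, km1] at this
  omega

lemma Ann_one : Ann 1 := fun _ _ => pderiv_one

lemma Ann_pderiv_km1 {p : V} (h : Ann p) (u v : ℤ) : Ann (pderiv (km1 u v) p) := by
  intro m n
  rw [pderiv_comm' (k1 m n) (km1 u v) p, h, map_zero]

lemma Ann_X_mul {p : V} (h : Ann p) (u v : ℤ) : Ann (X (km1 u v) * p) := by
  intro m n
  rw [pderiv_mul, pderiv_X_of_ne (Ne.symm (k1_ne_km1 m n u v)), h]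
  simp

lemma Ann_smul {p : V} (lam : ℂ) (h : Ann p) : Ann (lam • p) := by
  intro m n; rw [Derivation.map_smul, h, smul_zero]

lemma Ann_Qop {p : V} (c d : K → ℂ) (u v : ℤ) (h : Ann p) :
    Ann (Qop c d (km1 u v) p) := by
  intro m n
  unfold Qop
  rw [map_add, Ann_smul _ (Ann_pderiv_km1 h u v) m n, Ann_smul _ (Ann_X_mul h u v) m n,
    add_zero]

lemma Ann_genAct_e32 {p : V} (c d : K → ℂ) (beta : Cq) (h : Ann p) :
    Ann (genAct (fun m n => e32 c d m n) beta p) := by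
  intro m n
  unfold genAct
  rw [Finsupp.sum, map_sum]
  refine Finset.sum_eq_zero fun mn _ => ?_
  exact Ann_smul _ (Ann_Qop c d mn.1 mn.2 h) m n

lemma Ann_actE32g (c d : K → ℂ) (L : List Cq) : Ann (actE32g c d L 1) := by
  induction L with
  | nil => exact Ann_one
  | cons beta L ih => exact Ann_genAct_e32 c d beta ih

/-- `E₂₁(a)` annihilates every vector of level `(0, n)`:
`E₂₁(a).(E₃₂(β₁)⋯E₃₂(β_n).1) = 0` for all `a, β₁, …, β_n ∈ ℂ_q`. -/
theorem E21_kills_level_zero (a c d : K → ℂ) (had : ∀ i, a i * d i = 1)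
    (q μ : ℂ) (hq : q ≠ 0) :
    ∀ (α : Cq) (L : List Cq),
      genAct (fun m n => e21 a c d q μ m n) α (actE32g c d L 1) = 0 := by
  intro alpha L
  set p := actE32g c d L 1 with hp
  have hAnn : Ann p := Ann_actE32g c d L
  have h1 : ∀ m n : ℤ, pderiv (k1 m n) p = 0 := hAnn
  have h2 : ∀ m n u v : ℤ, pderiv (k1 m n) (pderiv (km1 u v) p) = 0 :=
    fun m n u v => Ann_pderiv_km1 hAnn u v m n
  have key : ∀ m1 n1 : ℤ, e21 a c d q μ m1 n1 p = 0 := by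
    intro m1 n1
    simp [e21, Pop, Qop, h1, h2]
  unfold genAct
  rw [Finsupp.sum]
  exact Finset.sum_eq_zero fun mn _ => by
    show alpha mn • e21 a c d q μ mn.1 mn.2 p = 0
    rw [key mn.1 mn.2, smul_zero]
end
end
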